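/- Let r(x) = Ax - |x| - b with A invertible and ‖A⁻¹‖ < 1 in spectral norm. Then the map x ↦ A⁻¹(|x| + b) is a contraction on ℝⁿ with Lipschitz constant ‖A⁻¹‖ < 1, and hence the absolute value equation Ax - |x| - b = 0 has a unique solution (its unique fixed point). -/

import Mathlib

open Matrix
open scoped BigOperators

/-- Euclidean norm of a vector in ℝⁿ. -/
noncomputable def evnorm {n : ℕ} (x : Fin n → ℝ) : ℝ := Real.sqrt (∑ i, x i ^ 2)

/-- Componentwise absolute value. -/
def vabs {n : ℕ} (x : Fin n → ℝ) : Fin n → ℝ := fun i => |x i|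

/-- Spectral norm: sup of ‖Ax‖ over unit vectors x. -/
noncomputable def specNorm {n : ℕ} (A : Matrix (Fin n) (Fin n) ℝ) : ℝ :=
  sSup {c : ℝ | ∃ x : Fin n → ℝ, evnorm x = 1 ∧ c = evnorm (A *ᵥ x)}

/-- Smallest singular value: inf of ‖Ax‖ over unit vectors x. -/
noncomputable def sigmaMin {n : ℕ} (A : Matrix (Fin n) (Fin n) ℝ) : ℝ :=
  sInf {c : ℝ | ∃ x : Fin n → ℝ, evnorm x = 1 ∧ c = evnorm (A *ᵥ x)}

lemma evnorm_eq {n : ℕ} (x : Fin n → ℝ) :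
    evnorm x = ‖(WithLp.equiv 2 (Fin n → ℝ)).symm x‖ := by
  rw [EuclideanSpace.norm_eq, evnorm]
  congr 1
  exact Finset.sum_congr rfl fun i _ => by rw [Real.norm_eq_abs, sq_abs]; rfl

lemma evnorm_nonneg {n : ℕ} (x : Fin n → ℝ) : 0 ≤ evnorm x := Real.sqrt_nonneg _

lemma specNorm_bddAbove {n : ℕ} (A : Matrix (Fin n) (Fin n) ℝ) :
    BddAbove {c : ℝ | ∃ x : Fin n → ℝ, evnorm x = 1 ∧ c = evnorm (A *ᵥ x)} := by
  set M : EuclideanSpace ℝ (Fin n) →L[ℝ] EuclideanSpace ℝ (Fin n) :=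
    LinearMap.toContinuousLinearMap (Matrix.toEuclideanLin A)
  have hM : ∀ w : Fin n → ℝ, M ((WithLp.equiv 2 (Fin n → ℝ)).symm w)
      = (WithLp.equiv 2 (Fin n → ℝ)).symm (A *ᵥ w) := by
    intro w
    show Matrix.toEuclideanLin A _ = _
    rw [Matrix.toEuclideanLin_apply]
    simp
  refine ⟨‖M‖, ?_⟩
  rintro c ⟨x, hx, rfl⟩
  rw [evnorm_eq, ← hM]
  calc ‖M ((WithLp.equiv 2 (Fin n → ℝ)).symm x)‖ ≤ ‖M‖ * ‖(WithLp.equiv 2 (Fin n → ℝ)).symm x‖ :=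
    M.le_opNorm _
  _ = ‖M‖ := by rw [← evnorm_eq, hx, mul_one]

lemma specNorm_bound {n : ℕ} (A : Matrix (Fin n) (Fin n) ℝ) (v : Fin n → ℝ) :
    evnorm (A *ᵥ v) ≤ specNorm A * evnorm v := by
  rcases eq_or_ne v 0 with rfl | hv
  · simp [evnorm, Matrix.mulVec_zero, Real.sqrt_zero]
  · have hnv : evnorm v ≠ 0 := by
      rw [evnorm_eq]
      simpa using fun h => hv ((WithLp.equiv 2 (Fin n → ℝ)).symm.injective (by simpa using h))
    have hnvpos : 0 < evnorm v := lt_of_le_of_ne (evnorm_nonneg v) (Ne.symm hnv)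
    set u : Fin n → ℝ := (evnorm v)⁻¹ • v with hu
    have hsmul : ∀ (c : ℝ) (w : Fin n → ℝ), evnorm (c • w) = |c| * evnorm w := by
      intro c w
      rw [evnorm_eq, evnorm_eq w]
      have : (WithLp.equiv 2 (Fin n → ℝ)).symm (c • w)
          = c • (WithLp.equiv 2 (Fin n → ℝ)).symm w := rfl
      rw [this, norm_smul, Real.norm_eq_abs]
    have hu1 : evnorm u = 1 := by
      rw [hu, hsmul, abs_of_pos (inv_pos.mpr hnvpos), inv_mul_cancel₀ hnv]
    have hmem : evnorm (A *ᵥ u) ∈ {c : ℝ | ∃ x : Fin n → ℝ, evnorm x = 1 ∧ c = evnorm (A *ᵥ x)} :=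
      ⟨u, hu1, rfl⟩
    have hle := le_csSup (specNorm_bddAbove A) hmem
    have : evnorm (A *ᵥ u) = (evnorm v)⁻¹ * evnorm (A *ᵥ v) := by
      rw [hu, Matrix.mulVec_smul, hsmul, abs_of_pos (inv_pos.mpr hnvpos)]
    rw [this] at hle
    calc evnorm (A *ᵥ v) = evnorm v * ((evnorm v)⁻¹ * evnorm (A *ᵥ v)) := by field_simp
    _ ≤ evnorm v * specNorm A := mul_le_mul_of_nonneg_left hle (le_of_lt hnvpos)
    _ = specNorm A * evnorm v := mul_comm _ _

lemma specNorm_nonneg {n : ℕ} (A : Matrix (Fin n) (Fin n) ℝ) : 0 ≤ specNorm A := by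
  rcases Nat.eq_zero_or_pos n with rfl | hn
  · unfold specNorm
    have : {c : ℝ | ∃ x : Fin 0 → ℝ, evnorm x = 1 ∧ c = evnorm (Matrix.mulVec A x)} = ∅ := by
      ext c; simp only [Set.mem_setOf_eq, Set.mem_empty_iff_false, iff_false]
      rintro ⟨x, hx, -⟩
      simp [evnorm] at hx
    rw [this, Real.sSup_empty]
  · have i0 : Fin n := ⟨0, hn⟩
    set e : Fin n → ℝ := Pi.single i0 1 with he
    have h1 : evnorm e = 1 := by
      rw [evnorm, he]
      have : (∑ i, (Pi.single i0 (1:ℝ) : Fin n → ℝ) i ^ 2) = 1 := by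
        rw [Finset.sum_eq_single i0]
        · simp
        · intro i _ hi; simp [Pi.single_apply, hi]
        · simp
      rw [this]; exact Real.sqrt_one
    have := le_csSup (specNorm_bddAbove A) (⟨e, h1, rfl⟩ :
      evnorm (A *ᵥ e) ∈ {c : ℝ | ∃ x : Fin n → ℝ, evnorm x = 1 ∧ c = evnorm (A *ᵥ x)})
    exact le_trans (evnorm_nonneg _) this

lemma evnorm_vabs_sub_le {n : ℕ} (x y : Fin n → ℝ) :
    evnorm (vabs x - vabs y) ≤ evnorm (x - y) := by
  unfold evnorm vabs
  apply Real.sqrt_le_sqrt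
  apply Finset.sum_le_sum
  intro i _
  have h1 : |(|x i| - |y i|)| ≤ |x i - y i| := abs_abs_sub_abs_le_abs_sub _ _
  calc (|x i| - |y i|) ^ 2 = |(|x i| - |y i|)| ^ 2 := (sq_abs _).symm
  _ ≤ |x i - y i| ^ 2 := by
      exact pow_le_pow_left₀ (abs_nonneg _) h1 2
  _ = (x i - y i) ^ 2 := sq_abs _

theorem stmt15 {n : ℕ} (A : Matrix (Fin n) (Fin n) ℝ) (b : Fin n → ℝ)
    (hA : IsUnit A.det) (hinv : specNorm A⁻¹ < 1) :
    (∀ x y : Fin n → ℝ,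
      evnorm (A⁻¹ *ᵥ (vabs x + b) - A⁻¹ *ᵥ (vabs y + b)) ≤ specNorm A⁻¹ * evnorm (x - y)) ∧
    (∃! x : Fin n → ℝ, A *ᵥ x - vabs x - b = 0) := by
  have key : ∀ x y : Fin n → ℝ,
      evnorm (A⁻¹ *ᵥ (vabs x + b) - A⁻¹ *ᵥ (vabs y + b)) ≤ specNorm A⁻¹ * evnorm (x - y) := by
    intro x y
    have h1 : A⁻¹ *ᵥ (vabs x + b) - A⁻¹ *ᵥ (vabs y + b) = A⁻¹ *ᵥ (vabs x - vabs y) := by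
      rw [← Matrix.mulVec_sub]
      congr 1
      abel
    rw [h1]
    calc evnorm (A⁻¹ *ᵥ (vabs x - vabs y)) ≤ specNorm A⁻¹ * evnorm (vabs x - vabs y) :=
      specNorm_bound _ _
    _ ≤ specNorm A⁻¹ * evnorm (x - y) :=
      mul_le_mul_of_nonneg_left (evnorm_vabs_sub_le x y) (specNorm_nonneg _)
  refine ⟨key, ?_⟩
  -- set up the contraction on EuclideanSpace
  set E := EuclideanSpace ℝ (Fin n)
  set eqv := WithLp.equiv 2 (Fin n → ℝ)
  set T : E → E := fun z => eqv.symm (A⁻¹ *ᵥ (vabs (eqv z) + b)) with hT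
  set K : NNReal := Real.toNNReal (specNorm A⁻¹) with hK
  have hKcoe : (K : ℝ) = specNorm A⁻¹ := Real.coe_toNNReal _ (specNorm_nonneg _)
  have hK1 : K < 1 := by
    rw [← NNReal.coe_lt_coe, hKcoe, NNReal.coe_one]
    exact hinv
  have hLip : LipschitzWith K T := by
    apply LipschitzWith.of_dist_le_mul
    intro z w
    rw [dist_eq_norm, dist_eq_norm, hKcoe]
    have h1 : T z - T w = eqv.symm (A⁻¹ *ᵥ (vabs (eqv z) + b) - A⁻¹ *ᵥ (vabs (eqv w) + b)) := rfl
    have h2 : z - w = eqv.symm (eqv z - eqv w) := rfl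
    rw [h1, h2, ← evnorm_eq, ← evnorm_eq]
    exact key (eqv z) (eqv w)
  have hC : ContractingWith K T := ⟨hK1, hLip⟩
  have hfix : ∃! z : E, Function.IsFixedPt T z :=
    ⟨hC.fixedPoint T, hC.fixedPoint_isFixedPt,
      fun z hz => hC.fixedPoint_unique hz⟩
  have hiff : ∀ x : Fin n → ℝ, (A *ᵥ x - vabs x - b = 0) ↔ Function.IsFixedPt T (eqv.symm x) := by
    intro x
    have heq : eqv (eqv.symm x) = x := rfl
    constructor
    · intro h
      have h' : A *ᵥ x = vabs x + b := by
        have := sub_eq_zero.mp (by rwa [sub_sub] at h)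
        exact this
      show T (eqv.symm x) = eqv.symm x
      rw [hT]
      simp only [heq]
      rw [← h', Matrix.mulVec_mulVec, Matrix.nonsing_inv_mul A hA, Matrix.one_mulVec]
    · intro h
      have h' : eqv.symm (A⁻¹ *ᵥ (vabs x + b)) = eqv.symm x := by
        have := h
        rw [hT] at this
        exact this
      have h2 : A⁻¹ *ᵥ (vabs x + b) = x := eqv.symm.injective h'
      have h3 := congrArg (fun v => A *ᵥ v) h2
      simp only [Matrix.mulVec_mulVec, Matrix.mul_nonsing_inv A hA, Matrix.one_mulVec] at h3
      rw [sub_sub, sub_eq_zero]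
      exact h3.symm
  obtain ⟨z, hz, huniq⟩ := hfix
  refine ⟨eqv z, ?_, ?_⟩
  · show A *ᵥ (eqv z) - vabs (eqv z) - b = 0
    rw [hiff]
    have h : eqv.symm (eqv z) = z := rfl
    rw [h]
    exact hz
  · intro x hx
    have h := huniq (eqv.symm x) ((hiff x).mp hx)
    calc x = eqv (eqv.symm x) := rfl
    _ = eqv z := congrArg eqv h
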